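/- Let G be a locally compact Hausdorff unimodular group, X a Hausdorff topological space, ν an atomless regular Borel measure on X, and G ↷ X a continuous measure-preserving action. Assume there exists x₀ in the support of ν such that Stab_G(x₀) is compact and ν(Kx₀) = 0 for every compact subset K of G. Then for each compact symmetric neighborhood S of the identity e in G, there exist a compact symmetric neighborhood F of e and a sequence of neighborhoods of x₀ in X that is of (S,F)-moderate growth. -/

import Mathlib

open MeasureTheory Pointwise Filter Topology
open scoped ENNReal NNReal

/-!
Take `F = S` and `B n = S² • W n`, where the open neighbourhood `W n` of `x₀` is so small
that `ν (S ^ (n + 2) • W n) < 1/2`: this is possible because the compact piece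
`S ^ (n + 2) • x₀` of the orbit is null and `ν` is outer regular. If `S²` is covered by `N`
left translates of `S`, then `ν (B n) ≤ N * ν (S • W n)`, while `S • W n ⊆ g • B n ∩ B n`
for every `g ∈ S`. Hence all overlap ratios are at least `1/N`, uniformly in `n`, and their
`n`-th roots tend to `1`.
-/

/-- A sequence `(B n)` of measurable subsets of `X` has `(S, F)`-moderate growth for the
measure-preserving action of `G` on `(X, ν)`. -/
def ModerateGrowth {G X : Type*} [Group G] [MeasurableSpace X] [SMul G X]
    (ν : Measure X) (S F : Set G) (B : ℕ → Set X) : Prop :=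
  (∀ n, MeasurableSet (B n)) ∧
  (∀ n, 0 < ν (B n)) ∧
  (∀ n : ℕ,
    sInf {m : ℝ≥0∞ | ∃ C : Set X, MeasurableSet C ∧ (S ^ n) • B n ⊆ C ∧ m = ν C} < 1 / 2) ∧
  1 ≤ limsup (fun n : ℕ => (⨅ g ∈ F, ν ((g • B n) ∩ B n) / ν (B n)) ^ (1 / (n : ℝ))) atTop

lemma IsCompact.pow {M : Type*} [Monoid M] [TopologicalSpace M] [ContinuousMul M] {K : Set M}
    (hK : IsCompact K) : ∀ n : ℕ, IsCompact (K ^ n)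
  | 0 => by simp
  | n + 1 => by rw [pow_succ]; exact (hK.pow n).mul hK

lemma ENNReal.tendsto_rpow_one_div_natCast {c : ℝ≥0∞} (hc0 : c ≠ 0) (hctop : c ≠ ⊤) :
    Tendsto (fun n : ℕ => c ^ (1 / (n : ℝ))) atTop (𝓝 1) := by
  lift c to ℝ≥0 using hctop
  have hc0' : c ≠ 0 := by exact_mod_cast hc0
  have := (tendsto_const_nhds (x := c)).nnrpow tendsto_one_div_atTop_nhds_zero_nat (Or.inl hc0')
  rw [NNReal.rpow_zero] at this
  simpa [ENNReal.coe_rpow_of_ne_zero hc0'] using ENNReal.tendsto_coe.2 this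

lemma ENNReal.one_le_limsup_rpow_one_div_of_le {a : ℕ → ℝ≥0∞} {c : ℝ≥0∞} (hc0 : c ≠ 0)
    (hctop : c ≠ ⊤) (hca : ∀ n, c ≤ a n) :
    1 ≤ limsup (fun n : ℕ => a n ^ (1 / (n : ℝ))) atTop := by
  rw [← (ENNReal.tendsto_rpow_one_div_natCast hc0 hctop).limsup_eq]
  exact limsup_le_limsup (.of_forall fun n => ENNReal.rpow_le_rpow (hca n) (by positivity))

lemma ENNReal.inv_natCast_le_div {N : ℕ} {a b : ℝ≥0∞} (ha0 : a ≠ 0) (hatop : a ≠ ⊤)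
    (h : a ≤ N * b) : (N : ℝ≥0∞)⁻¹ ≤ b / a := by
  rw [ENNReal.le_div_iff_mul_le (.inl ha0) (.inl hatop), mul_comm, ← div_eq_mul_inv]
  exact ENNReal.div_le_of_le_mul (by rwa [mul_comm])

lemma exists_isOpen_measure_smul_lt {G X : Type*} [TopologicalSpace G] [TopologicalSpace X]
    [SMul G X] [ContinuousSMul G X] [MeasurableSpace X] (ν : Measure X) [ν.OuterRegular]
    {K : Set G} (hK : IsCompact K) {x : X} {ε : ℝ≥0∞} (hε : ν ((· • x) '' K) < ε) :
    ∃ W : Set X, IsOpen W ∧ x ∈ W ∧ ν (K • W) < ε := by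
  obtain ⟨U, hKU, hUo, hUε⟩ := Set.exists_isOpen_lt_of_lt _ ε hε
  obtain ⟨u, W, -, hWo, hKu, hxW, huW⟩ := generalized_tube_lemma hK (isCompact_singleton (x := x))
    (hUo.preimage continuous_smul) (by
      rintro ⟨g, _⟩ ⟨hg, rfl⟩
      exact hKU ⟨g, hg, rfl⟩)
  refine ⟨W, hWo, hxW rfl, (measure_mono ?_).trans_lt hUε⟩
  rintro _ ⟨g, hg, w, hw, rfl⟩
  exact huW (Set.mk_mem_prod (hKu hg) hw)

section Group

variable {G X : Type*} [Group G] [MulAction G X]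

lemma exists_measure_mul_smul_le_natCast_mul [TopologicalSpace G] [IsTopologicalGroup G]
    [MeasurableSpace X] (ν : Measure X) [SMulInvariantMeasure G X ν]
    {S : Set G} (hS : IsCompact S) (hS1 : S ∈ 𝓝 1) :
    ∃ N : ℕ, 0 < N ∧ ∀ W : Set X, ν ((S * S) • W) ≤ N * ν (S • W) := by
  have h1S : (1 : G) ∈ S := mem_of_mem_nhds hS1
  obtain ⟨t, ht⟩ := compact_covered_by_mul_left_translates (hS.mul hS)
    ⟨1, mem_interior_iff_mem_nhds.2 hS1⟩
  obtain ⟨g, hg, -⟩ := Set.mem_iUnion₂.1 (ht (Set.subset_mul_right S h1S h1S))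
  refine ⟨t.card, Finset.card_pos.2 ⟨g, hg⟩, fun W => ?_⟩
  calc ν ((S * S) • W) ≤ ν (⋃ g ∈ t, g⁻¹ • S • W) := by
        refine measure_mono ?_
        rintro _ ⟨k, hk, w, hw, rfl⟩
        obtain ⟨g, hg, hgk⟩ := Set.mem_iUnion₂.1 (ht hk)
        refine Set.mem_iUnion₂.2 ⟨g, hg, (g * k) • w, Set.smul_mem_smul hgk hw, ?_⟩
        simp [smul_smul]
    _ ≤ ∑ g ∈ t, ν (g⁻¹ • S • W) := measure_biUnion_finset_le t _
    _ = t.card * ν (S • W) := by simp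

lemma smul_subset_smul_mul_smul_inter {S : Set G} (hS : S = S⁻¹) (hS1 : (1 : G) ∈ S) {g : G}
    (hg : g ∈ S) (W : Set X) : S • W ⊆ g • ((S * S) • W) ∩ (S * S) • W := by
  refine Set.subset_inter ?_ (Set.smul_subset_smul_right (Set.subset_mul_right S hS1))
  rintro _ ⟨s, hs, w, hw, rfl⟩
  refine ⟨(g⁻¹ * s) • w, Set.smul_mem_smul (Set.mul_mem_mul ?_ hs) hw, by simp [smul_smul]⟩
  rw [hS]; simpa using hg

end Group

theorem exists_moderate_growth_neighborhoods_general
    {G X : Type*} [Group G] [TopologicalSpace G] [IsTopologicalGroup G]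
    -- `X` a Hausdorff topological space, `ν` an atomless regular Borel measure on `X`
    [TopologicalSpace X] [MeasurableSpace X] [BorelSpace X]
    (ν : Measure X) [ν.Regular]
    -- a continuous measure-preserving action of `G` on `X`
    [MulAction G X]
    (hcont : Continuous fun p : G × X => p.1 • p.2)
    (hact : ∀ g : G, MeasurePreserving (fun x : X => g • x) ν ν)
    -- a point `x₀` of the support of `ν` with compact stabilizer and null partial orbits
    (x₀ : X)
    (hsupp : ∀ U : Set X, IsOpen U → x₀ ∈ U → 0 < ν U)
    (horbit : ∀ K : Set G, IsCompact K → ν ((fun g : G => g • x₀) '' K) = 0) :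
    ∀ S : Set G, IsCompact S → S = S⁻¹ → S ∈ 𝓝 (1 : G) →
      ∃ F : Set G, IsCompact F ∧ F = F⁻¹ ∧ F ∈ 𝓝 (1 : G) ∧
        ∃ B : ℕ → Set X, (∀ n, B n ∈ 𝓝 x₀) ∧ ModerateGrowth ν S F B := by
  intro S hS hSsymm hS1
  have : ContinuousSMul G X := ⟨hcont⟩
  have : SMulInvariantMeasure G X ν :=
    ⟨fun g _ hs => (hact g).measure_preimage hs.nullMeasurableSet⟩
  have h1S : (1 : G) ∈ S := mem_of_mem_nhds hS1
  choose W hWo hxW hW using fun n => exists_isOpen_measure_smul_lt ν (hS.pow (n + 2))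
    ((horbit _ (hS.pow (n + 2))).trans_lt (by norm_num : (0 : ℝ≥0∞) < 1 / 2))
  have hBo n : IsOpen ((S * S) • W n) := (hWo n).smul_left
  have hxB n : x₀ ∈ (S * S) • W n :=
    ⟨1, Set.subset_mul_right S h1S h1S, x₀, hxW n, one_smul G x₀⟩
  have hBsmall n : ν ((S ^ n) • (S * S) • W n) < 1 / 2 := by
    rw [smul_smul, ← sq, ← pow_add]
    exact hW n
  have hBfin n : ν ((S * S) • W n) ≠ ⊤ := by
    refine ((measure_mono fun x hx => ?_).trans_lt (hBsmall n)).ne_top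
    exact ⟨1, Set.one_mem_pow h1S, x, hx, one_smul G x⟩
  obtain ⟨N, hN0, hN⟩ := exists_measure_mul_smul_le_natCast_mul ν hS hS1
  have hoverlap n g (hg : g ∈ S) :
      ν ((S * S) • W n) ≤ N * ν (g • (S * S) • W n ∩ (S * S) • W n) :=
    (hN (W n)).trans (by gcongr; exact smul_subset_smul_mul_smul_inter hSsymm h1S hg (W n))
  refine ⟨S, hS, hSsymm, hS1, fun n => (S * S) • W n, fun n => (hBo n).mem_nhds (hxB n),
    fun n => (hBo n).measurableSet, fun n => hsupp _ (hBo n) (hxB n), fun n => ?_, ?_⟩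
  · refine (sInf_le ?_).trans_lt (hBsmall n)
    exact ⟨_, (hBo n).smul_left.measurableSet, subset_rfl, rfl⟩
  · exact ENNReal.one_le_limsup_rpow_one_div_of_le
      (ENNReal.inv_ne_zero.2 (ENNReal.natCast_ne_top N))
      (ENNReal.inv_ne_top.2 (by exact_mod_cast hN0.ne')) fun n => le_iInf₂ fun g hg =>
        ENNReal.inv_natCast_le_div (hsupp _ (hBo n) (hxB n)).ne' (hBfin n) (hoverlap n g hg)

theorem exists_moderate_growth_neighborhoods
    {G X : Type*} [Group G] [TopologicalSpace G] [IsTopologicalGroup G]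
    [LocallyCompactSpace G] [T2Space G] [MeasurableSpace G] [BorelSpace G]
    -- `G` is unimodular: a left Haar measure `μG` which is also right invariant
    (μG : Measure G) [μG.IsHaarMeasure] [μG.IsMulRightInvariant]
    -- `X` a Hausdorff topological space, `ν` an atomless regular Borel measure on `X`
    [TopologicalSpace X] [T2Space X] [MeasurableSpace X] [BorelSpace X]
    (ν : Measure X) [ν.Regular]
    (hatomless : ∀ A : Set X, MeasurableSet A → 0 < ν A →
      ∃ B ⊆ A, MeasurableSet B ∧ ν B ≠ 0 ∧ ν B ≠ ν A)
    -- a continuous measure-preserving action of `G` on `X`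
    [MulAction G X]
    (hcont : Continuous fun p : G × X => p.1 • p.2)
    (hact : ∀ g : G, MeasurePreserving (fun x : X => g • x) ν ν)
    -- a point `x₀` of the support of `ν` with compact stabilizer and null partial orbits
    (x₀ : X)
    (hsupp : ∀ U : Set X, IsOpen U → x₀ ∈ U → 0 < ν U)
    (hstab : IsCompact ((MulAction.stabilizer G x₀ : Subgroup G) : Set G))
    (horbit : ∀ K : Set G, IsCompact K → ν ((fun g : G => g • x₀) '' K) = 0) :
    ∀ S : Set G, IsCompact S → S = S⁻¹ → S ∈ 𝓝 (1 : G) →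
      ∃ F : Set G, IsCompact F ∧ F = F⁻¹ ∧ F ∈ 𝓝 (1 : G) ∧
        ∃ B : ℕ → Set X, (∀ n, B n ∈ 𝓝 x₀) ∧ ModerateGrowth ν S F B :=
  exists_moderate_growth_neighborhoods_general ν hcont hact x₀ hsupp horbit
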